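/- For β, λ, u, c, t > 0, let f₀(t)=(β/2)e^{-βt}(1+βt), let f be the Erlang(2,β) density and let f₁ = t f₀; then the ruin-time density e^{-λ(u+ct)}( f₀(t) + (u+ct)^{-1} ∑_{m≥1} (λ^m(u+ct)^m/m!)[u (f^{*m}*f₀)(t) + c (f^{*m}*f₁)(t)] ) equals e^{-λ(u+ct)-βt} (β/(2(u+ct))) [ u·₀F₂(1/2, 1; λ(u+ct)(βt)²/4) + t(βu+c)·₀F₂(1, 3/2; λ(u+ct)(βt)²/4) + cβt²·₀F₂(3/2, 2; λ(u+ct)(βt)²/4) ]. -/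

import Mathlib

open Real

/-- Convolution of two functions on `(0, ∞)`: `(g * h)(t) = ∫_0^t g(t-v) h(v) dv`. -/
noncomputable def conv (g h : ℝ → ℝ) : ℝ → ℝ := fun t => ∫ v in (0:ℝ)..t, g (t - v) * h v

/-- `cpm f g m = f^{*m} * g`, the `m`-fold self-convolution of `f` convolved with `g`
(with `f^{*0} * g = g`).  In particular `cpm f f m = f^{*(m+1)}`. -/
noncomputable def cpm (f g : ℝ → ℝ) : ℕ → ℝ → ℝ
  | 0 => g
  | m + 1 => conv f (cpm f g m)

open Finset

/-- Pochhammer symbol. -/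
noncomputable def poch (a : ℝ) (m : ℕ) : ℝ := ∏ k ∈ range m, (a + k)

/-- `₀F₂(C₁, C₂; x) = ∑_{m≥0} x^m / ((C₁)_m (C₂)_m m!)`. -/
noncomputable def F02 (C₁ C₂ x : ℝ) : ℝ := ∑' m : ℕ, x ^ m / (poch C₁ m * poch C₂ m * m.factorial)

/-! ### Auxiliary lemmas -/

lemma fact_cast_ne (n : ℕ) : ((n.factorial : ℝ)) ≠ 0 :=
  Nat.cast_ne_zero.mpr (Nat.factorial_ne_zero n)

lemma aux_integral (k : ℕ) (r : ℝ) :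
    (∫ v in (0:ℝ)..r, (r - v) * v ^ k) = r ^ (k+2) / ((k+1)*(k+2)) := by
  have h1 : (∫ v in (0:ℝ)..r, (r - v) * v ^ k)
      = ∫ v in (0:ℝ)..r, (r * v ^ k - v ^ (k+1)) := by
    apply intervalIntegral.integral_congr
    intro v _
    show (r - v) * v ^ k = r * v ^ k - v ^ (k+1)
    rw [pow_succ]; ring
  rw [h1, intervalIntegral.integral_sub ((by fun_prop : Continuous fun v : ℝ => r * v ^ k).intervalIntegrable _ _)
    ((continuous_pow (k+1)).intervalIntegrable _ _),
    intervalIntegral.integral_const_mul, integral_pow, integral_pow]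
  have hk1 : ((k:ℝ)+1) ≠ 0 := by positivity
  have hk2 : ((k:ℝ)+2) ≠ 0 := by positivity
  push_cast
  field_simp
  ring

lemma conv_step (β c1 c2 : ℝ) (k : ℕ) (r : ℝ) :
    conv (fun s => β^2 * s * exp (-β*s)) (fun v => (c1*v^k + c2*v^(k+1)) * exp (-β*v)) r
      = β^2 * (c1 * r^(k+2)/(((k:ℝ)+1)*((k:ℝ)+2)) + c2 * r^(k+3)/(((k:ℝ)+2)*((k:ℝ)+3))) * exp (-β*r) := by
  unfold conv
  have h1 : (∫ v in (0:ℝ)..r, (β^2 * (r-v) * exp (-β*(r-v))) * ((c1*v^k + c2*v^(k+1)) * exp (-β*v)))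
      = ∫ v in (0:ℝ)..r, ((β^2 * exp (-β*r)) * (c1 * ((r-v)*v^k)) + (β^2 * exp (-β*r)) * (c2 * ((r-v)*v^(k+1)))) := by
    apply intervalIntegral.integral_congr
    intro v _
    show (β^2 * (r-v) * exp (-β*(r-v))) * ((c1*v^k + c2*v^(k+1)) * exp (-β*v))
      = (β^2 * exp (-β*r)) * (c1 * ((r-v)*v^k)) + (β^2 * exp (-β*r)) * (c2 * ((r-v)*v^(k+1)))
    have hexp : exp (-β*(r-v)) * exp (-β*v) = exp (-β*r) := by
      rw [← Real.exp_add]; ring_nf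
    calc (β^2 * (r-v) * exp (-β*(r-v))) * ((c1*v^k + c2*v^(k+1)) * exp (-β*v))
        = β^2 * ((r-v) * (c1*v^k + c2*v^(k+1))) * (exp (-β*(r-v)) * exp (-β*v)) := by ring
      _ = β^2 * ((r-v) * (c1*v^k + c2*v^(k+1))) * exp (-β*r) := by rw [hexp]
      _ = _ := by ring
  have i1 : IntervalIntegrable (fun v => (β^2 * exp (-β*r)) * (c1 * ((r-v)*v^k))) MeasureTheory.volume 0 r :=
    (Continuous.intervalIntegrable (by fun_prop) _ _)
  have i2 : IntervalIntegrable (fun v => (β^2 * exp (-β*r)) * (c2 * ((r-v)*v^(k+1)))) MeasureTheory.volume 0 r :=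
    (Continuous.intervalIntegrable (by fun_prop) _ _)
  rw [h1, intervalIntegral.integral_add i1 i2,
    intervalIntegral.integral_const_mul, intervalIntegral.integral_const_mul,
    intervalIntegral.integral_const_mul, intervalIntegral.integral_const_mul,
    aux_integral, aux_integral]
  push_cast
  ring

lemma cpm_f0 (β : ℝ) (m : ℕ) (r : ℝ) :
    cpm (fun s => β^2 * s * exp (-β*s)) (fun s => (β/2) * exp (-β*s) * (1 + β*s)) m r
      = (1/2) * (β^(2*m+1) * r^(2*m) / ((2*m).factorial : ℝ)
          + β^(2*m+2) * r^(2*m+1) / ((2*m+1).factorial : ℝ)) * exp (-β*r) := by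
  induction m generalizing r with
  | zero => show (β/2) * exp (-β*r) * (1 + β*r) = _
            norm_num [Nat.factorial]; ring
  | succ m ih =>
    show conv _ (cpm _ _ m) r = _
    have hg : cpm (fun s => β^2 * s * exp (-β*s)) (fun s => (β/2) * exp (-β*s) * (1 + β*s)) m
        = fun v => ((β^(2*m+1)/(2*((2*m).factorial:ℝ))) * v^(2*m)
             + (β^(2*m+2)/(2*((2*m+1).factorial:ℝ))) * v^(2*m+1)) * exp (-β*v) := by
      funext v; rw [ih]; ring
    rw [hg, conv_step]
    have e1 : (((2*m+1).factorial : ℝ)) = (2*(m:ℝ)+1) * ((2*m).factorial : ℝ) := by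
      rw [Nat.factorial_succ]; push_cast; ring
    have e2 : (((2*(m+1)).factorial : ℝ)) = (2*(m:ℝ)+2) * (((2*m+1).factorial : ℝ)) := by
      rw [show 2*(m+1) = (2*m+1)+1 by ring, Nat.factorial_succ]; push_cast; ring
    have e3 : (((2*(m+1)+1).factorial : ℝ)) = (2*(m:ℝ)+3) * (((2*(m+1)).factorial : ℝ)) := by
      rw [show 2*(m+1)+1 = (2*(m+1))+1 by ring, Nat.factorial_succ]; push_cast; ring
    have h0 := fact_cast_ne (2*m)
    have hx1 : (2*(m:ℝ)+1) ≠ 0 := by positivity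
    have hx2 : (2*(m:ℝ)+2) ≠ 0 := by positivity
    have hx3 : (2*(m:ℝ)+3) ≠ 0 := by positivity
    rw [e3, e2, e1]
    rw [show 2*(m+1) = 2*m+2 by ring, show 2*m+2+1 = 2*m+3 by ring]
    push_cast
    field_simp
    ring

lemma cpm_f1 (β : ℝ) (m : ℕ) (r : ℝ) :
    cpm (fun s => β^2 * s * exp (-β*s)) (fun s => s * ((β/2) * exp (-β*s) * (1 + β*s))) m r
      = (1/2) * (β^(2*m+1) * r^(2*m+1) / ((2*m+1).factorial : ℝ)
          + 2 * β^(2*m+2) * r^(2*m+2) / ((2*m+2).factorial : ℝ)) * exp (-β*r) := by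
  induction m generalizing r with
  | zero => show r * ((β/2) * exp (-β*r) * (1 + β*r)) = _
            norm_num [Nat.factorial]; ring
  | succ m ih =>
    show conv _ (cpm _ _ m) r = _
    have hg : cpm (fun s => β^2 * s * exp (-β*s)) (fun s => s * ((β/2) * exp (-β*s) * (1 + β*s))) m
        = fun v => ((β^(2*m+1)/(2*((2*m+1).factorial:ℝ))) * v^(2*m+1)
             + (β^(2*m+2)/(((2*m+2).factorial:ℝ))) * v^((2*m+1)+1)) * exp (-β*v) := by
      funext v; rw [ih]; ring
    rw [hg, conv_step]
    have e2 : (((2*m+2).factorial : ℝ)) = (2*(m:ℝ)+2) * (((2*m+1).factorial : ℝ)) := by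
      rw [show 2*m+2 = (2*m+1)+1 by ring, Nat.factorial_succ]; push_cast; ring
    have e3 : (((2*(m+1)+1).factorial : ℝ)) = (2*(m:ℝ)+3) * (((2*m+2).factorial : ℝ)) := by
      rw [show 2*(m+1)+1 = (2*m+2)+1 by ring, Nat.factorial_succ]; push_cast; ring
    have e4 : (((2*(m+1)+2).factorial : ℝ)) = (2*(m:ℝ)+4) * (((2*(m+1)+1).factorial : ℝ)) := by
      rw [show 2*(m+1)+2 = (2*(m+1)+1)+1 by ring, Nat.factorial_succ]; push_cast; ring
    have h0 := fact_cast_ne (2*m+1)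
    have hx2 : (2*(m:ℝ)+2) ≠ 0 := by positivity
    have hx3 : (2*(m:ℝ)+3) ≠ 0 := by positivity
    have hx4 : (2*(m:ℝ)+4) ≠ 0 := by positivity
    rw [e4, e3, e2]
    rw [show 2*(m+1)+1 = 2*m+3 by ring, show 2*(m+1)+2 = 2*m+4 by ring,
        show 2*m+1+2 = 2*m+3 by ring, show 2*m+1+3 = 2*m+4 by ring]
    push_cast
    field_simp
    ring

lemma poch_succ' (a : ℝ) (m : ℕ) : poch a (m+1) = poch a m * (a + m) :=
  Finset.prod_range_succ _ _

lemma poch_one (m : ℕ) : poch 1 m = m.factorial := by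
  induction m with
  | zero => simp [poch]
  | succ m ih => rw [poch_succ', ih, Nat.factorial_succ]; push_cast; ring

lemma poch_two (m : ℕ) : poch 2 m = (m+1).factorial := by
  induction m with
  | zero => simp [poch]
  | succ m ih =>
    rw [poch_succ', ih, show ((m+1)+1).factorial = ((m+1)+1) * (m+1).factorial from Nat.factorial_succ _]
    push_cast; ring

lemma poch_half (m : ℕ) : poch (1/2) m = ((2*m).factorial : ℝ) / (4^m * m.factorial) := by
  induction m with
  | zero => simp [poch]
  | succ m ih =>
    rw [poch_succ', ih]
    have e1 : (((2*(m+1)).factorial : ℝ)) = (2*(m:ℝ)+2) * (2*(m:ℝ)+1) * ((2*m).factorial : ℝ) := by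
      rw [show 2*(m+1) = (2*m+1)+1 by ring, Nat.factorial_succ, Nat.factorial_succ]; push_cast; ring
    have e2 : (((m+1).factorial : ℝ)) = ((m:ℝ)+1) * (m.factorial : ℝ) := by
      rw [Nat.factorial_succ]; push_cast; ring
    have h0 := fact_cast_ne m
    have h4 : (4:ℝ)^m ≠ 0 := by positivity
    have hx : ((m:ℝ)+1) ≠ 0 := by positivity
    rw [e1, e2, pow_succ]
    field_simp
    ring

lemma poch_threehalf (m : ℕ) : poch (3/2) m = ((2*m+1).factorial : ℝ) / (4^m * m.factorial) := by
  induction m with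
  | zero => simp [poch]
  | succ m ih =>
    rw [poch_succ', ih]
    have e1 : (((2*(m+1)+1).factorial : ℝ)) = (2*(m:ℝ)+3) * (2*(m:ℝ)+2) * ((2*m+1).factorial : ℝ) := by
      rw [show 2*(m+1)+1 = ((2*m+1)+1)+1 by ring, Nat.factorial_succ, Nat.factorial_succ]; push_cast; ring
    have e2 : (((m+1).factorial : ℝ)) = ((m:ℝ)+1) * (m.factorial : ℝ) := by
      rw [Nat.factorial_succ]; push_cast; ring
    have h0 := fact_cast_ne m
    have h4 : (4:ℝ)^m ≠ 0 := by positivity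
    have hx : ((m:ℝ)+1) ≠ 0 := by positivity
    rw [e1, e2, pow_succ]
    field_simp
    ring

/-- The common summand. -/
noncomputable def Sfn (β lam u c t : ℝ) (m : ℕ) : ℝ :=
  lam^m * (u+c*t)^m / m.factorial *
    (u * ((1/2) * (β^(2*m+1)*t^(2*m)/((2*m).factorial:ℝ) + β^(2*m+2)*t^(2*m+1)/((2*m+1).factorial:ℝ)))
     + c * ((1/2) * (β^(2*m+1)*t^(2*m+1)/((2*m+1).factorial:ℝ) + 2*β^(2*m+2)*t^(2*m+2)/((2*m+2).factorial:ℝ))))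

noncomputable def pfn (Y : ℝ) (m : ℕ) : ℝ := Y^m / (m.factorial * (2*m).factorial)
noncomputable def qfn (Y : ℝ) (m : ℕ) : ℝ := Y^m / (m.factorial * (2*m+1).factorial)
noncomputable def wfn (Y : ℝ) (m : ℕ) : ℝ := Y^m / ((m+1).factorial * (2*m+1).factorial)

lemma summable_aux (Y : ℝ) (hY : 0 ≤ Y) (g : ℕ → ℝ) (hg : ∀ m, 1 ≤ g m) :
    Summable (fun m : ℕ => Y^m / (m.factorial * g m)) := by
  refine Summable.of_nonneg_of_le (fun m => ?_) (fun m => ?_)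
    (Real.summable_pow_div_factorial Y)
  · have h1 : (0:ℝ) < g m := lt_of_lt_of_le one_pos (hg m)
    positivity
  · have h1 : (0:ℝ) < g m := lt_of_lt_of_le one_pos (hg m)
    have h2 : (0:ℝ) < (m.factorial : ℝ) := by exact_mod_cast m.factorial_pos
    rw [div_le_div_iff₀ (by positivity) h2]
    exact mul_le_mul_of_nonneg_left (le_mul_of_one_le_right h2.le (hg m)) (by positivity)

lemma key_term (β lam u c t : ℝ) (hβ : β ≠ 0) (m : ℕ) :
    u * pfn (lam*(u+c*t)*β^2*t^2) m + t*(β*u+c) * qfn (lam*(u+c*t)*β^2*t^2) m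
      + c*β*t^2 * wfn (lam*(u+c*t)*β^2*t^2) m = (2/β) * Sfn β lam u c t m := by
  unfold pfn qfn wfn Sfn
  have hY : (lam*(u+c*t)*β^2*t^2)^m = lam^m*(u+c*t)^m*β^(2*m)*t^(2*m) := by
    calc (lam*(u+c*t)*β^2*t^2)^m = lam^m*(u+c*t)^m*(β^2)^m*(t^2)^m := by
          rw [mul_pow, mul_pow, mul_pow]
      _ = lam^m*(u+c*t)^m*β^(2*m)*t^(2*m) := by rw [← pow_mul, ← pow_mul]
  have e1 : (((2*m+1).factorial : ℝ)) = (2*(m:ℝ)+1) * ((2*m).factorial : ℝ) := by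
    rw [Nat.factorial_succ]; push_cast; ring
  have e2 : (((2*m+2).factorial : ℝ)) = (2*(m:ℝ)+2) * (((2*m+1).factorial : ℝ)) := by
    rw [show 2*m+2 = (2*m+1)+1 by ring, Nat.factorial_succ]; push_cast; ring
  have e3 : (((m+1).factorial : ℝ)) = ((m:ℝ)+1) * (m.factorial : ℝ) := by
    rw [Nat.factorial_succ]; push_cast; ring
  have h0 := fact_cast_ne m
  have h1 := fact_cast_ne (2*m)
  have hx1 : (2*(m:ℝ)+1) ≠ 0 := by positivity
  have hx2 : (2*(m:ℝ)+2) ≠ 0 := by positivity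
  have hx3 : ((m:ℝ)+1) ≠ 0 := by positivity
  rw [hY, e2, e1, e3]
  field_simp
  ring

/-- The ruin-time density series for Erlang(2, β) inter-claim times in the stationary case
(`f₀` the equilibrium density of Erlang(2, β)) equals the closed form in terms of `₀F₂`. -/
theorem stationary_erlang2_density_closed_form (β lam u c t : ℝ)
    (hβ : 0 < β) (hlam : 0 < lam) (hu : 0 < u) (hc : 0 < c) (ht : 0 < t)
    (f f₀ f₁ : ℝ → ℝ)
    (hf : f = fun r => β ^ 2 * r * exp (-β * r))
    (hf₀ : f₀ = fun r => (β / 2) * exp (-β * r) * (1 + β * r))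
    (hf₁ : f₁ = fun r => r * f₀ r) :
    exp (-lam * (u + c * t)) *
        (f₀ t + (u + c * t)⁻¹ *
          ∑' m : ℕ, (lam ^ (m + 1) * (u + c * t) ^ (m + 1) / ((m + 1).factorial : ℝ)) *
            (u * cpm f f₀ (m + 1) t + c * cpm f f₁ (m + 1) t))
      = exp (-lam * (u + c * t) - β * t) * (β / (2 * (u + c * t))) *
          (u * F02 (1 / 2) 1 (lam * (u + c * t) * (β * t) ^ 2 / 4)
            + t * (β * u + c) * F02 1 (3 / 2) (lam * (u + c * t) * (β * t) ^ 2 / 4)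
            + c * β * t ^ 2 * F02 (3 / 2) 2 (lam * (u + c * t) * (β * t) ^ 2 / 4)) := by
  subst hf₁ hf₀ hf
  have hWne : (u + c*t) ≠ 0 := by positivity
  set Y : ℝ := lam*(u+c*t)*β^2*t^2 with hYdef
  have hY : 0 ≤ Y := by positivity
  have hp : Summable (pfn Y) := by
    have := summable_aux Y hY (fun m => ((2*m).factorial : ℝ))
      (fun m => by show (1:ℝ) ≤ ((2*m).factorial : ℝ)
                   exact_mod_cast Nat.one_le_iff_ne_zero.mpr (Nat.factorial_ne_zero _))
    exact this.congr fun m => rfl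
  have hq : Summable (qfn Y) := by
    have := summable_aux Y hY (fun m => ((2*m+1).factorial : ℝ))
      (fun m => by show (1:ℝ) ≤ ((2*m+1).factorial : ℝ)
                   exact_mod_cast Nat.one_le_iff_ne_zero.mpr (Nat.factorial_ne_zero _))
    exact this.congr fun m => rfl
  have hw : Summable (wfn Y) := by
    have := summable_aux Y hY (fun m => ((m:ℝ)+1) * ((2*m+1).factorial : ℝ))
      (fun m => by
        show (1:ℝ) ≤ ((m:ℝ)+1) * ((2*m+1).factorial : ℝ)
        have h1 : (1:ℝ) ≤ ((m:ℝ)+1) := by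
          have := Nat.cast_nonneg (α := ℝ) m; linarith
        have h2 : (1:ℝ) ≤ ((2*m+1).factorial : ℝ) :=
          by exact_mod_cast Nat.one_le_iff_ne_zero.mpr (Nat.factorial_ne_zero _)
        nlinarith)
    refine this.congr fun m => ?_
    unfold wfn
    rw [show ((m+1).factorial : ℝ) = ((m:ℝ)+1) * (m.factorial : ℝ) from by
      rw [Nat.factorial_succ]; push_cast; ring]
    ring_nf
  have key : ∀ m, u * pfn Y m + t*(β*u+c) * qfn Y m + c*β*t^2 * wfn Y m
      = (2/β) * Sfn β lam u c t m := key_term β lam u c t hβ.ne'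
  have hS : Summable (Sfn β lam u c t) := by
    have h := (((hp.mul_left u).add (hq.mul_left (t*(β*u+c)))).add (hw.mul_left (c*β*t^2))).mul_left (β/2)
    refine h.congr fun m => ?_
    have : u * pfn Y m + t*(β*u+c) * qfn Y m + c*β*t^2 * wfn Y m
        = (2/β) * Sfn β lam u c t m := key m
    show (β/2) * (u * pfn Y m + t*(β*u+c) * qfn Y m + c*β*t^2 * wfn Y m) = _
    rw [this]
    field_simp
  have hx4 : ∀ m : ℕ, (4:ℝ)^m ≠ 0 := fun m => by positivity
  have hX : lam * (u + c * t) * (β * t) ^ 2 / 4 = Y / 4 := by rw [hYdef]; ring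
  have hF1 : F02 (1/2) 1 (lam * (u + c * t) * (β * t) ^ 2 / 4) = ∑' m, pfn Y m := by
    unfold F02
    refine tsum_congr fun m => ?_
    rw [hX, poch_half, poch_one, div_pow]
    unfold pfn
    rw [show (4:ℝ)^m = ((4^m : ℝ)) from rfl]
    field_simp
  have hF2 : F02 1 (3/2) (lam * (u + c * t) * (β * t) ^ 2 / 4) = ∑' m, qfn Y m := by
    unfold F02
    refine tsum_congr fun m => ?_
    rw [hX, poch_threehalf, poch_one, div_pow]
    unfold qfn
    field_simp
  have hF3 : F02 (3/2) 2 (lam * (u + c * t) * (β * t) ^ 2 / 4) = ∑' m, wfn Y m := by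
    unfold F02
    refine tsum_congr fun m => ?_
    rw [hX, poch_threehalf, poch_two, div_pow]
    unfold wfn
    field_simp
  have hbr : u * F02 (1/2) 1 (lam * (u + c * t) * (β * t) ^ 2 / 4)
      + t * (β * u + c) * F02 1 (3/2) (lam * (u + c * t) * (β * t) ^ 2 / 4)
      + c * β * t ^ 2 * F02 (3/2) 2 (lam * (u + c * t) * (β * t) ^ 2 / 4)
      = (2/β) * ∑' m, Sfn β lam u c t m := by
    rw [hF1, hF2, hF3, ← tsum_mul_left, ← tsum_mul_left, ← tsum_mul_left,
      ← Summable.tsum_add (hp.mul_left u) (hq.mul_left (t*(β*u+c))),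
      ← Summable.tsum_add ((hp.mul_left u).add (hq.mul_left (t*(β*u+c)))) (hw.mul_left (c*β*t^2)),
      ← tsum_mul_left]
    exact tsum_congr key
  have hinner : (∑' m : ℕ, (lam ^ (m + 1) * (u + c * t) ^ (m + 1) / ((m + 1).factorial : ℝ)) *
        (u * cpm (fun r => β ^ 2 * r * exp (-β * r)) (fun r => (β / 2) * exp (-β * r) * (1 + β * r)) (m + 1) t
          + c * cpm (fun r => β ^ 2 * r * exp (-β * r)) (fun r => r * ((β / 2) * exp (-β * r) * (1 + β * r))) (m + 1) t))
      = (∑' m : ℕ, Sfn β lam u c t (m+1)) * exp (-β*t) := by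
    rw [← tsum_mul_right]
    refine tsum_congr fun m => ?_
    rw [cpm_f0, cpm_f1]
    unfold Sfn
    ring
  have hsplit := Summable.tsum_eq_zero_add hS
  have hf0t : (β/2) * exp (-β*t) * (1 + β*t)
      = exp (-β*t) * ((u+c*t)⁻¹ * Sfn β lam u c t 0) := by
    unfold Sfn
    norm_num [Nat.factorial]
    field_simp
  have hexp : exp (-lam * (u + c * t) - β * t) = exp (-lam * (u + c * t)) * exp (-β*t) := by
    rw [← Real.exp_add]; ring_nf
  rw [hbr, hexp]
  show exp (-lam * (u + c * t)) * ((β/2) * exp (-β*t) * (1 + β*t) + (u + c * t)⁻¹ * _) = _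
  rw [hf0t, hinner, hsplit]
  field_simp
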